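/- For 0 < z ≤ 1/10 the expression G(z) := 3·(K_1(z)/K_2(z)) + z·(K_1(z)/K_2(z))² − z − 4/z satisfies z·G(z) < −3; in particular G(z) < 0. -/

import Mathlib

open Real MeasureTheory

/-- `K_1(z) = z⁻¹ ∫_z^∞ e^{-λ}(λ²−z²)^{1/2} dλ`. -/
noncomputable def K1 (z : ℝ) : ℝ :=
  z⁻¹ * ∫ l in Set.Ioi z, Real.exp (-l) * Real.sqrt (l ^ 2 - z ^ 2)

/-- `K_2(z) = z⁻² ∫_z^∞ λ e^{-λ}(λ²−z²)^{1/2} dλ`. -/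
noncomputable def K2 (z : ℝ) : ℝ :=
  z ^ (-2 : ℤ) * ∫ l in Set.Ioi z, l * Real.exp (-l) * Real.sqrt (l ^ 2 - z ^ 2)

/-- `G(z) = (∂_z|_η p)/p = 3 K_1/K_2 + z (K_1/K_2)² − z − 4/z`. -/
noncomputable def G (z : ℝ) : ℝ :=
  3 * (K1 z / K2 z) + z * (K1 z / K2 z) ^ 2 - z - 4 / z

/-!
Since `λ ≥ z` on the range of integration, `z K_1(z) = ∫ z e^{-λ}(λ²−z²)^{1/2} ≤ z² K_2(z)`,
so the ratio `r = K_1/K_2` lies in `[0, 1]`. Then `z G(z) = 3zr + z²r² − z² − 4 ≤ 3z − 4`,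
which is `< −3` as soon as `z < 1/3`.
-/

open Set

lemma integrableOn_pow_mul_exp_neg_Ioi (n : ℕ) {a : ℝ} (ha : 0 ≤ a) :
    IntegrableOn (fun x : ℝ => x ^ n * exp (-x)) (Ioi a) := by
  refine ((GammaIntegral_convergent (s := n + 1) (by positivity)).congr_fun (fun x _ => ?_)
    measurableSet_Ioi).mono_set (Ioi_subset_Ioi ha)
  rw [add_sub_cancel_right, rpow_natCast, mul_comm]

lemma sqrt_sq_sub_sq_le {l : ℝ} (z : ℝ) (hl : 0 ≤ l) : √(l ^ 2 - z ^ 2) ≤ l :=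
  (sqrt_le_left hl).mpr (sub_le_self _ (sq_nonneg z))

lemma integrableOn_K2_integrand {z : ℝ} (hz : 0 ≤ z) :
    IntegrableOn (fun l => l * exp (-l) * √(l ^ 2 - z ^ 2)) (Ioi z) := by
  refine (integrableOn_pow_mul_exp_neg_Ioi 2 hz).mono' (by fun_prop) ?_
  filter_upwards [ae_restrict_mem measurableSet_Ioi] with l hl
  have hl₀ : 0 ≤ l := hz.trans hl.le
  rw [norm_of_nonneg (by positivity)]
  calc l * exp (-l) * √(l ^ 2 - z ^ 2) ≤ l * exp (-l) * l := by
        gcongr; exact sqrt_sq_sub_sq_le z hl₀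
    _ = l ^ 2 * exp (-l) := by ring

lemma K1_nonneg {z : ℝ} (hz : 0 ≤ z) : 0 ≤ K1 z :=
  mul_nonneg (inv_nonneg.mpr hz) (setIntegral_nonneg measurableSet_Ioi fun _ _ => by positivity)

lemma K1_le_K2 {z : ℝ} (hz : 0 ≤ z) : K1 z ≤ K2 z := by
  have hI : z * ∫ l in Ioi z, exp (-l) * √(l ^ 2 - z ^ 2) ≤
      ∫ l in Ioi z, l * exp (-l) * √(l ^ 2 - z ^ 2) := by
    rw [← integral_const_mul]
    refine setIntegral_mono_of_nonneg (fun _ _ => by positivity) (fun l hl => ?_)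
      (integrableOn_K2_integrand hz)
    rw [mul_assoc l]
    exact mul_le_mul_of_nonneg_right (mem_Ioi.mp hl).le (by positivity)
  have hinv : z⁻¹ = z ^ (-2 : ℤ) * z := by
    rcases hz.eq_or_lt with rfl | hz₀
    · simp
    · field_simp
  rw [K1, K2, hinv, mul_assoc]
  exact mul_le_mul_of_nonneg_left hI (by positivity)

lemma K1_div_K2_mem_Icc {z : ℝ} (hz : 0 ≤ z) : K1 z / K2 z ∈ Icc 0 1 :=
  have hK2 : 0 ≤ K2 z := (K1_nonneg hz).trans (K1_le_K2 hz)
  ⟨div_nonneg (K1_nonneg hz) hK2, div_le_one_of_le₀ (K1_le_K2 hz) hK2⟩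

lemma mul_G_le {z : ℝ} (hz : 0 < z) : z * G z ≤ 3 * z - 4 := by
  obtain ⟨hr₀, hr₁⟩ := K1_div_K2_mem_Icc hz.le
  rw [G]
  generalize K1 z / K2 z = r at hr₀ hr₁ ⊢
  have hzG : z * (3 * r + z * r ^ 2 - z - 4 / z) = 3 * z * r + z ^ 2 * (r ^ 2 - 1) - 4 := by
    field_simp
    ring
  have hr2 : r ^ 2 ≤ 1 := pow_le_one₀ hr₀ hr₁
  rw [hzG]
  nlinarith [mul_nonpos_of_nonneg_of_nonpos (sq_nonneg z) (sub_nonpos.mpr hr2)]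

/-- For `0 < z ≤ 1/10`, `z G(z) < −3`; in particular `G(z) < 0`. -/
theorem G_neg_small_z (z : ℝ) (hz : 0 < z) (hz' : z ≤ 1 / 10) :
    z * G z < -3 ∧ G z < 0 := by
  have h : z * G z < -3 := by linarith [mul_G_le hz]
  exact ⟨h, neg_of_mul_neg_right (h.trans (by norm_num)) hz.le⟩
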